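/- arXiv:1103.3939 — 2 statements merged into one kernel-verified Lean document; each statement's English description precedes it below -/
import Mathlib

section
/- Let G be a finite group whose commutator subgroup G' has index 2 in G and which has no irreducible complex representation of degree 2 (i.e., 2 ∉ cd(G)). Then G' is perfect, that is, G'' = G'. -/
open CategoryTheory

/-- The set of degrees of irreducible complex representations of `G`. -/
noncomputable def cd (G : Type) [Group G] : Set ℕ :=
  {d | ∃ V : FDRep ℂ G, Simple V ∧ Module.finrank ℂ V = d}

/-!
Suppose `G'' < G'` and pick `t ∉ G'`. As `G = G' ∪ G' t`, if `t` centralised `G' / G''` then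
`G / G''` would be abelian, forcing `G' ≤ G''`. So some `h ∈ G'` has `⁅t⁻¹, h⁆ ∉ G''`, and a linear
character `ψ` of `G'` that is nontrivial on `⁅t⁻¹, h⁆` differs from its conjugate `ψ^t`. The
representation of `G` induced from `ψ` then has dimension `[G : G'] = 2` and is irreducible: the
two lines on which `G'` acts by `ψ` and `ψ^t` are the only `G'`-stable lines, and `t` swaps them.
-/

open scoped commutatorElement

universe u

theorem commutator_le_of_index_two {G : Type*} [Group G] {H N : Subgroup G} [N.Normal]
    (hH : H.index = 2) {t : G} (ht : t ∉ H) (hHH : ⁅H, H⁆ ≤ N) (htH : ∀ h ∈ H, ⁅t, h⁆ ∈ N) :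
    commutator G ≤ N := by
  let π := QuotientGroup.mk' N
  have commute_iff (x y : G) : Commute (π x) (π y) ↔ ⁅x, y⁆ ∈ N := by
    rw [← commutatorElement_eq_one_iff_commute, ← map_commutatorElement, QuotientGroup.mk'_apply,
      QuotientGroup.eq_one_iff]
  have mem_or_mul_mem (x : G) : ∃ h ∈ H, h = x ∨ h * t = x := by
    by_cases hx : x ∈ H
    · exact ⟨x, hx, .inl rfl⟩
    · exact ⟨x * t⁻¹, (Subgroup.mul_mem_iff_of_index_two hH).2 (iff_of_false hx (inv_mem_iff.not.2 ht)),
        .inr (by group)⟩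
  have hHH' (a : G) (ha : a ∈ H) (b : G) (hb : b ∈ H) : Commute (π a) (π b) :=
    (commute_iff a b).2 (hHH (Subgroup.commutator_mem_commutator ha hb))
  have htH' (a : G) (ha : a ∈ H) : Commute (π t) (π a) := (commute_iff t a).2 (htH a ha)
  rw [commutator_def, Subgroup.commutator_le]
  intro x _ y _
  obtain ⟨a, ha, rfl | rfl⟩ := mem_or_mul_mem x <;> obtain ⟨b, hb, rfl | rfl⟩ := mem_or_mul_mem y <;>
    simp only [← commute_iff, map_mul]
  · exact hHH' a ha b hb
  · exact (hHH' a ha b hb).mul_right (htH' a ha).symm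
  · exact (hHH' a ha b hb).mul_left (htH' b hb)
  · exact ((hHH' a ha b hb).mul_right (htH' a ha).symm).mul_left ((htH' b hb).mul_right (.refl _))

theorem exists_monoidHom_apply_ne_one_of_notMem_commutator {K : Type*} [Group K] [Finite K]
    {x : K} (hx : x ∉ commutator K) : ∃ ψ : K →* ℂˣ, ψ x ≠ 1 := by
  have : Abelianization.of x ≠ 1 := by
    rwa [Ne, ← MonoidHom.mem_ker, Abelianization.ker_of]
  obtain ⟨φ, hφ⟩ := CommGroup.exists_apply_ne_one_of_hasEnoughRootsOfUnity _ ℂ this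
  exact ⟨φ.comp Abelianization.of, hφ⟩

section DiagonalAntidiagonal

variable {k : Type*} [Field k]

@[simps]
def diagMap (a b : k) : k × k →ₗ[k] k × k where
  toFun v := (a * v.1, b * v.2)
  map_add' v w := by ext <;> simp [mul_add]
  map_smul' c v := by ext <;> simp [mul_left_comm]

@[simps]
def antidiagMap (a b : k) : k × k →ₗ[k] k × k where
  toFun v := (a * v.2, b * v.1)
  map_add' v w := by ext <;> simp [mul_add]
  map_smul' c v := by ext <;> simp [mul_left_comm]

theorem Submodule.eq_bot_or_eq_top_of_diag_antidiag {p : Submodule k (k × k)} {a b c d : k}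
    (hab : a ≠ b) (hc : c ≠ 0) (hd : d ≠ 0) (hdiag : ∀ v ∈ p, diagMap a b v ∈ p)
    (hanti : ∀ v ∈ p, antidiagMap c d v ∈ p) : p = ⊥ ∨ p = ⊤ := by
  refine or_iff_not_imp_left.2 fun hp => ?_
  obtain ⟨⟨x, y⟩, hv, hv0⟩ := p.ne_bot_iff.1 hp
  have top_of_fst {z : k} (hz : z ≠ 0) (hzp : (z, 0) ∈ p) : p = ⊤ := by
    have h₁ : ((1 : k), (0 : k)) ∈ p := by simpa [hz] using p.smul_mem z⁻¹ hzp
    have h₂ : ((0 : k), (1 : k)) ∈ p := by simpa [hd] using p.smul_mem d⁻¹ (hanti _ h₁)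
    refine eq_top_iff'.2 fun w => ?_
    simpa using p.add_mem (p.smul_mem w.1 h₁) (p.smul_mem w.2 h₂)
  have hab' : a - b ≠ 0 := sub_ne_zero.2 hab
  by_cases hx : x = 0
  · have hy : y ≠ 0 := fun h => hv0 (by simp [hx, h])
    have hsnd : ((0 : k), (a - b) * y) ∈ p := by
      simpa [sub_mul] using p.sub_mem (p.smul_mem a hv) (hdiag _ hv)
    exact top_of_fst (mul_ne_zero hc (mul_ne_zero hab' hy)) (by simpa using hanti _ hsnd)
  · have hfst : ((a - b) * x, (0 : k)) ∈ p := by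
      simpa [sub_mul] using p.sub_mem (hdiag _ hv) (p.smul_mem b hv)
    exact top_of_fst (mul_ne_zero hab' hx) hfst

end DiagonalAntidiagonal

section IndexTwo

variable {k G : Type*} [Field k] [Group G] {H : Subgroup G}

/-- Only arguments in `H` are ever used; the value `1` elsewhere is arbitrary. -/
noncomputable def extendByOne (ψ : H →* kˣ) : G → k :=
  Function.extend Subtype.val (fun h => (ψ h : k)) 1

variable (ψ : H →* kˣ)

theorem extendByOne_of_mem {g : G} (hg : g ∈ H) : extendByOne ψ g = ψ ⟨g, hg⟩ :=
  Subtype.val_injective.extend_apply _ _ ⟨g, hg⟩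

theorem extendByOne_ne_zero {g : G} (hg : g ∈ H) : extendByOne ψ g ≠ 0 := by
  simp [extendByOne_of_mem ψ hg]

theorem extendByOne_one : extendByOne ψ 1 = 1 := by
  rw [extendByOne_of_mem ψ (one_mem H)]
  exact congrArg Units.val (map_one ψ)

theorem extendByOne_mul {a b : G} (ha : a ∈ H) (hb : b ∈ H) :
    extendByOne ψ (a * b) = extendByOne ψ a * extendByOne ψ b := by
  rw [extendByOne_of_mem ψ ha, extendByOne_of_mem ψ hb, extendByOne_of_mem ψ (mul_mem ha hb),
    ← Units.val_mul, ← map_mul, MulMemClass.mk_mul_mk]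

/-- `Ind_H^G ψ` in the basis `e, t • e`, where `H` acts on the line of `e` by `ψ`. -/
noncomputable def inducedRep (hH : H.index = 2) (t : G) (ht : t ∉ H) :
    Representation k G (k × k) where
  toFun g := open scoped Classical in
    if g ∈ H then diagMap (extendByOne ψ g) (extendByOne ψ (t⁻¹ * g * t))
    else antidiagMap (extendByOne ψ (g * t)) (extendByOne ψ (t⁻¹ * g))
  map_one' := by ext <;> simp [extendByOne_one]
  map_mul' g₁ g₂ := by
    have hmem (x y : G) : x * y ∈ H ↔ (x ∈ H ↔ y ∈ H) := Subgroup.mul_mem_iff_of_index_two hH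
    refine LinearMap.ext fun v => ?_
    -- in each of the four coset cases, each entry is an instance of `extendByOne_mul`
    by_cases h₁ : g₁ ∈ H <;> by_cases h₂ : g₂ ∈ H <;>
      simp only [Module.End.mul_apply, hmem, h₁, h₂, iff_true, iff_false, not_true,
        if_true, if_false, diagMap_apply, antidiagMap_apply, Prod.mk.injEq] <;>
      constructor <;> rw [← mul_assoc (extendByOne ψ _), ← extendByOne_mul ψ] <;>
      first | (congr 2; group; done) | simp [hmem, h₁, h₂, ht]

variable (hH : H.index = 2) {t : G} (ht : t ∉ H)

theorem inducedRep_apply_of_mem {g : G} (hg : g ∈ H) :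
    inducedRep ψ hH t ht g = diagMap (extendByOne ψ g) (extendByOne ψ (t⁻¹ * g * t)) :=
  if_pos hg

theorem inducedRep_apply_of_notMem {g : G} (hg : g ∉ H) :
    inducedRep ψ hH t ht g = antidiagMap (extendByOne ψ (g * t)) (extendByOne ψ (t⁻¹ * g)) :=
  if_neg hg

theorem inducedRep_isIrreducible {h : G} (hh : h ∈ H) (hh' : t⁻¹ * h * t ∈ H)
    (hsep : ψ ⟨h, hh⟩ ≠ ψ ⟨t⁻¹ * h * t, hh'⟩) : (inducedRep ψ hH t ht).IsIrreducible where
  exists_pair_ne := ⟨⊥, ⊤, fun e => bot_ne_top (congrArg Subrepresentation.toSubmodule e)⟩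
  eq_bot_or_eq_top σ := by
    have hab : extendByOne ψ h ≠ extendByOne ψ (t⁻¹ * h * t) := by
      rw [extendByOne_of_mem ψ hh, extendByOne_of_mem ψ hh']
      exact fun e => hsep (Units.ext e)
    have htt : t * t ∈ H := (Subgroup.mul_mem_iff_of_index_two hH).2 (iff_of_false ht ht)
    have htt' : t⁻¹ * t ∈ H := by simp
    have hdiag (v : k × k) (hv : v ∈ σ.toSubmodule) := σ.apply_mem_toSubmodule h hv
    have hanti (v : k × k) (hv : v ∈ σ.toSubmodule) := σ.apply_mem_toSubmodule t hv
    rw [inducedRep_apply_of_mem ψ hH ht hh] at hdiag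
    rw [inducedRep_apply_of_notMem ψ hH ht ht] at hanti
    rcases Submodule.eq_bot_or_eq_top_of_diag_antidiag hab (extendByOne_ne_zero ψ htt)
      (extendByOne_ne_zero ψ htt') hdiag hanti with hσ | hσ
    exacts [.inl (Subrepresentation.ext hσ), .inr (Subrepresentation.ext hσ)]

end IndexTwo

theorem FDRep.simple_of_isIrreducible {k G V : Type u} [Field k] [Monoid G] [AddCommGroup V]
    [Module k V] [FiniteDimensional k V] (ρ : Representation k G V) [ρ.IsIrreducible] :
    Simple (FDRep.of ρ) :=
  have : Simple ((forget₂ (FDRep k G) (Rep k G) ⋙ Rep.toModuleMonoidAlgebra).obj (FDRep.of ρ)) :=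
    simple_iff_isSimpleModule.2 (inferInstanceAs (IsSimpleModule _ ρ.asModule))
  (forget₂ (FDRep k G) (Rep k G) ⋙ Rep.toModuleMonoidAlgebra).simple_of_simple_obj _

theorem stmt12 (G : Type) [Group G] [Fintype G]
    (hindex : (commutator G).index = 2) (h2 : 2 ∉ cd G) :
    ⁅commutator G, commutator G⁆ = commutator G := by
  by_contra hne
  obtain ⟨t, ht⟩ : ∃ t, t ∉ commutator G := by
    by_contra! h
    simp [(Subgroup.eq_top_iff' _).2 h] at hindex
  obtain ⟨h, hh, hth⟩ : ∃ h ∈ commutator G, ⁅t⁻¹, h⁆ ∉ ⁅commutator G, commutator G⁆ := by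
    by_contra! hall
    exact hne (le_antisymm (Subgroup.commutator_le_self _)
      (commutator_le_of_index_two hindex (inv_mem_iff.not.2 ht) le_rfl hall))
  have hh' : t⁻¹ * h * t ∈ commutator G := Subgroup.Normal.conj_mem' inferInstance h hh t
  let x : commutator G := ⟨t⁻¹ * h * t, hh'⟩ * (⟨h, hh⟩)⁻¹
  have hx : x ∉ _root_.commutator (commutator G) := fun hx => hth <| by
    rw [← Subgroup.map_subtype_commutator]
    exact ⟨x, hx, by simp [x, commutatorElement_def]⟩
  obtain ⟨ψ, hψ⟩ := exists_monoidHom_apply_ne_one_of_notMem_commutator hx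
  have hsep : ψ ⟨h, hh⟩ ≠ ψ ⟨t⁻¹ * h * t, hh'⟩ := fun e =>
    hψ (by rw [map_mul, map_inv, e, mul_inv_cancel])
  have := inducedRep_isIrreducible ψ hindex ht hh hh' hsep
  exact h2 ⟨FDRep.of (inducedRep ψ hindex t ht), FDRep.simple_of_isIrreducible _, by simp⟩
end

section
/- For every integer n ≥ 5, the number of conjugacy classes of the symmetric group S_n is strictly less than twice the number of conjugacy classes of the alternating group A_n: k(S_n) < 2·k(A_n). -/
/-!
Counting commuting pairs gives `k(G) |G| = ∑ₓ |C_G(x)|`. If `H ≤ G` has index `m`, then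
`|C_G(x)| ≤ m |C_G(x) ∩ H|`; summing over `x` and exchanging the two commuting elements turns
`∑ₓ |C_G(x) ∩ H|` into `∑_{y ∈ H} |C_G(y)|`, and a second use of the same bound gives
`k(G) |G| ≤ m² k(H) |H|`, that is `k(G) ≤ m k(H)`. The first bound is strict at any `x` whose
centralizer lies in a proper `H`. In `S_n`, `n ≥ 3`, an odd cycle moving all but at most one point
is such an element for `H = A_n`: its centralizer consists of its own powers.
-/

open Equiv Subgroup

theorem sum_card_centralizer_eq (G : Type*) [Group G] [Fintype G] :
    ∑ x : G, Nat.card (centralizer {x}) = Nat.card (ConjClasses G) * Nat.card G := by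
  rw [← card_comm_eq_card_conjClasses_mul_card, ← Nat.card_sigma]
  exact Nat.card_congr ((Equiv.subtypeProdEquivSigmaSubtype Commute).trans
    (Equiv.sigmaCongrRight fun x => Equiv.subtypeEquivRight fun y =>
      by rw [mem_centralizer_singleton_iff, Commute, SemiconjBy, eq_comm])).symm

namespace Subgroup

variable {G : Type*} [Group G]

theorem card_centralizer_eq_card_inf_centralizer (H : Subgroup G) (y : H) :
    Nat.card (centralizer {y}) = Nat.card ↥(H ⊓ centralizer {(y : G)}) :=
  Nat.card_congr
    { toFun := fun z => ⟨z.1, z.1.2, mem_centralizer_singleton_iff.mpr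
        (congrArg Subtype.val (mem_centralizer_singleton_iff.mp z.2))⟩
      invFun := fun z => ⟨⟨z.1, z.2.1⟩, mem_centralizer_singleton_iff.mpr
        (Subtype.ext (mem_centralizer_singleton_iff.mp z.2.2))⟩
      left_inv := fun _ => rfl
      right_inv := fun _ => rfl }

theorem sum_card_inf_centralizer_eq [Fintype G] (H : Subgroup G) [Fintype H] :
    ∑ x : G, Nat.card ↥(H ⊓ centralizer {x}) = ∑ y : H, Nat.card (centralizer {(y : G)}) := by
  rw [← Nat.card_sigma, ← Nat.card_sigma]
  refine Nat.card_congr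
    { toFun := fun ⟨x, y, hy⟩ => ⟨⟨y, hy.1⟩, x, ?_⟩
      invFun := fun ⟨y, x, hx⟩ => ⟨x, y, y.2, ?_⟩
      left_inv := fun _ => rfl
      right_inv := fun _ => rfl }
  · exact mem_centralizer_singleton_iff.mpr (mem_centralizer_singleton_iff.mp hy.2).symm
  · exact mem_centralizer_singleton_iff.mpr (mem_centralizer_singleton_iff.mp hx).symm

theorem card_le_index_mul_card_inf (H K : Subgroup G) [H.FiniteIndex] :
    Nat.card K ≤ H.index * Nat.card ↥(H ⊓ K) := by
  have hcard : Nat.card (H.subgroupOf K) = Nat.card ↥(H ⊓ K) := by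
    rw [← inf_subgroupOf_right]
    exact Nat.card_congr (subgroupOfEquivOfLe inf_le_right).toEquiv
  calc Nat.card K = H.relIndex K * Nat.card (H.subgroupOf K) :=
        ((H.subgroupOf K).index_mul_card).symm
    _ ≤ H.index * Nat.card ↥(H ⊓ K) := by
        rw [hcard, ← relIndex_top_right]
        gcongr
        exact relIndex_le_of_le_right le_top (relIndex_top_right H ▸ FiniteIndex.index_ne_zero)

theorem card_conjClasses_lt_index_mul [Finite G] {H : Subgroup G} (hH : H ≠ ⊤) {x : G}
    (hx : centralizer {x} ≤ H) :
    Nat.card (ConjClasses G) < H.index * Nat.card (ConjClasses H) := by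
  have := Fintype.ofFinite G
  have := Fintype.ofFinite H
  set m := H.index
  have hm : 1 < m := one_lt_index_of_ne_top hH
  have key : Nat.card (ConjClasses G) * Nat.card G
      < m * Nat.card (ConjClasses H) * Nat.card G :=
    calc Nat.card (ConjClasses G) * Nat.card G
        = ∑ x : G, Nat.card (centralizer {x}) := (sum_card_centralizer_eq G).symm
      _ < ∑ x : G, m * Nat.card ↥(H ⊓ centralizer {x}) := by
          refine Finset.sum_lt_sum (fun x _ => card_le_index_mul_card_inf H _)
            ⟨x, Finset.mem_univ x, ?_⟩
          rw [inf_eq_right.mpr hx]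
          exact lt_mul_left Nat.card_pos hm
      _ = m * ∑ y : H, Nat.card (centralizer {(y : G)}) := by
          rw [← Finset.mul_sum, sum_card_inf_centralizer_eq]
      _ ≤ m * ∑ y : H, m * Nat.card (centralizer {y}) := by
          simp only [card_centralizer_eq_card_inf_centralizer]
          gcongr
          exact card_le_index_mul_card_inf H _
      _ = m * Nat.card (ConjClasses H) * Nat.card G := by
          rw [← Finset.mul_sum, sum_card_centralizer_eq H, ← H.index_mul_card]
          ring
  exact Nat.lt_of_mul_lt_mul_right key

end Subgroup

theorem Equiv.Perm.exists_centralizer_le_alternatingGroup {n : ℕ} (hn : 3 ≤ n) :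
    ∃ g : Perm (Fin n), centralizer {g} ≤ alternatingGroup (Fin n) := by
  have : NeZero n := ⟨by omega⟩
  -- a cycle of odd length `n` or `n - 1`
  let i : Fin n := ⟨2 * ((n - 1) / 2), by omega⟩
  have hi : i ≠ 0 := Fin.ne_of_val_ne (by rw [Fin.val_zero]; change 2 * ((n - 1) / 2) ≠ 0; omega)
  refine ⟨Fin.cycleRange i, ?_⟩
  rw [centralizer_le_alternating_iff, Fin.cycleType_cycleRange hi]
  refine ⟨by simp [i], ?_, Multiset.nodup_iff_count_le_one.mp (Multiset.nodup_singleton _)⟩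
  rw [Fintype.card_fin, Multiset.sum_singleton]
  change n ≤ 2 * ((n - 1) / 2) + 1 + 1
  omega

theorem stmt15 (n : ℕ) (hn : 5 ≤ n) :
    Nat.card (ConjClasses (Equiv.Perm (Fin n))) <
      2 * Nat.card (ConjClasses (alternatingGroup (Fin n))) := by
  have : Nontrivial (Fin n) := Fin.nontrivial_iff_two_le.mpr (by omega)
  obtain ⟨g, hg⟩ := Equiv.Perm.exists_centralizer_le_alternatingGroup (n := n) (by omega)
  have hA : alternatingGroup (Fin n) ≠ ⊤ := fun h => by
    simpa [h] using alternatingGroup.index_eq_two (α := Fin n)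
  simpa [alternatingGroup.index_eq_two] using card_conjClasses_lt_index_mul hA hg
end
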